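/- Define r(n) by r(1)=1, r(2)=2, and r(n+1) = r(n) + 2·r(n-1) + 1 for n ≥ 2. Then r(n) equals the number of lists of length n+1 over the three nonzero elements {1,2,3} of Z/2 × Z/2 that are non-constant, sum to 1, and have no proper nonempty prefix summing to 3. -/

import Mathlib

/-- The color `1 = (0,1)` of `Z/2 × Z/2`. -/
def col1 : ZMod 2 × ZMod 2 := (0, 1)

/-- The color `3 = (1,1)` of `Z/2 × Z/2`. -/
def col3 : ZMod 2 × ZMod 2 := (1, 1)

/-!
The prefix sums `0 = s₀, s₁, …, sₙ₊₁ = 1` of a counted vector form a walk in the complete graph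
on the triangle `{0, 1, 2} = (Z/2 × Z/2) \ {3}`: consecutive prefix sums differ because the entries
are nonzero, and the vector is recovered from the walk by taking differences. In the complete graph
on `q` vertices the walk counts `w(m)` between two fixed vertices satisfy
`w(m+2) + w(m+1) = (q-1) (w(m+1) + w(m))` (the adjacency matrix has eigenvalues `q-1` and `-1`),
so here `w(m+2) = w(m+1) + 2 w(m)`. The walks from `0` to `1` also count the constant vector
`(1, …, 1)` when its length `n+1` is odd, and no other constant vector, so the claim becomes
`r(n) + [n even] = w(n+1)`, and both sides satisfy the same recurrence.
-/

open Finset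

section CliqueWalks

variable {α : Type*} [Fintype α] [DecidableEq α]

/-- Walks of length `m` from `a` to `b` in the complete graph on `S`. -/
def cliqueWalks (S : Finset α) (m : ℕ) (a b : α) : Finset (Fin (m + 1) → α) :=
  univ.filter fun s => s 0 = a ∧ s (Fin.last m) = b ∧ (∀ i, s i ∈ S) ∧
    ∀ i : Fin m, s i.succ ≠ s i.castSucc

@[simp]
theorem mem_cliqueWalks {S : Finset α} {m : ℕ} {a b : α} {s : Fin (m + 1) → α} :
    s ∈ cliqueWalks S m a b ↔ s 0 = a ∧ s (Fin.last m) = b ∧ (∀ i, s i ∈ S) ∧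
      ∀ i : Fin m, s i.succ ≠ s i.castSucc := by
  simp [cliqueWalks]

variable {S : Finset α} {b : α}

theorem card_cliqueWalks_succ (hb : b ∈ S) (m : ℕ) (a : α) :
    #(cliqueWalks S (m + 1) a b) = ∑ y ∈ S.erase b, #(cliqueWalks S m a y) := by
  rw [← card_sigma]
  refine card_nbij' (fun s => ⟨s (Fin.last m).castSucc, Fin.init s⟩) (fun p => Fin.snoc p.2 b)
    ?_ ?_ ?_ ?_
  · intro s hs
    obtain ⟨h0, rfl, hS, hstep⟩ := mem_cliqueWalks.1 hs
    simp_all [Fin.forall_fin_succ', Fin.init]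
    exact fun h => hstep.2 h.symm
  · rintro ⟨y, t⟩ h
    simp_all [Fin.forall_fin_succ', -Fin.castSucc_succ, Fin.succ_castSucc]
    exact fun hby => h.1.2 hby.symm
  · intro s hs
    obtain ⟨-, rfl, -⟩ := mem_cliqueWalks.1 hs
    exact Fin.snoc_init_self s
  · rintro ⟨y, t⟩ h
    simp_all

theorem card_cliqueWalks_succ_add (hb : b ∈ S) (m : ℕ) (a : α) :
    #(cliqueWalks S (m + 1) a b) + #(cliqueWalks S m a b) = ∑ y ∈ S, #(cliqueWalks S m a y) := by
  rw [card_cliqueWalks_succ hb, sum_erase_add _ _ hb]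

theorem card_cliqueWalks_add_two (hb : b ∈ S) (m : ℕ) (a : α) :
    #(cliqueWalks S (m + 2) a b) + #(cliqueWalks S (m + 1) a b) =
      (#S - 1) * (#(cliqueWalks S (m + 1) a b) + #(cliqueWalks S m a b)) := by
  have htotal : ∑ y ∈ S, #(cliqueWalks S (m + 1) a y) + ∑ y ∈ S, #(cliqueWalks S m a y) =
      #S * ∑ y ∈ S, #(cliqueWalks S m a y) := by
    rw [← sum_add_distrib, ← smul_eq_mul, ← sum_const]
    exact sum_congr rfl fun y hy => card_cliqueWalks_succ_add hy m a
  rw [card_cliqueWalks_succ_add hb, card_cliqueWalks_succ_add hb, Nat.sub_one_mul]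
  omega

end CliqueWalks

theorem Fin.partialSum_eq_sum_filter_lt {M : Type*} [AddCommMonoid M] {n : ℕ} (f : Fin n → M)
    (i : Fin (n + 1)) :
    Fin.partialSum f i = ∑ j ∈ univ.filter (fun j : Fin n => (j : ℕ) < i), f j := by
  induction i using Fin.induction with
  | zero => simp
  | succ i ih =>
    have hfilter : univ.filter (fun j : Fin n => (j : ℕ) < i.succ) =
        insert i (univ.filter fun j : Fin n => (j : ℕ) < i.castSucc) := by
      ext j
      simp [Fin.ext_iff]
      omega
    rw [Fin.partialSum_succ, ih, hfilter, sum_insert (by simp), add_comm]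

theorem Fin.partialSum_last {M : Type*} [AddCommMonoid M] {n : ℕ} (f : Fin n → M) :
    Fin.partialSum f (Fin.last n) = ∑ j, f j := by
  rw [Fin.partialSum_eq_sum_filter_lt]
  simp

section AvoidingVectors

variable {G : Type*} [AddCommGroup G] [Fintype G] [DecidableEq G]

theorem card_filter_partialSum_mem {n : ℕ} (T : Finset (Fin (n + 1) → G))
    (hT : ∀ s ∈ T, s 0 = 0) :
    #(univ.filter fun v : Fin n → G => Fin.partialSum v ∈ T) = #T := by
  have hinv : ∀ s ∈ T, Fin.partialSum (fun i => -s i.castSucc + s i.succ) = s := fun s hs => by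
    simpa [hT s hs] using Fin.partialSum_left_neg s
  refine card_nbij' Fin.partialSum (fun s i => -s i.castSucc + s i.succ) ?_ ?_ ?_ ?_
  · intro v hv
    exact (mem_filter.1 hv).2
  · intro s hs
    simpa [hinv s hs] using hs
  · intro v _
    exact funext (Fin.partialSum_right_neg v)
  · exact hinv

def avoidingVectors (n : ℕ) (c d : G) : Finset (Fin (n + 1) → G) :=
  univ.filter fun v => (∀ j, v j ≠ 0) ∧ (∑ j, v j) = c ∧
    ∀ k : ℕ, 1 ≤ k → k ≤ n →
      (∑ j ∈ univ.filter (fun j : Fin (n + 1) => (j : ℕ) < k), v j) ≠ d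

theorem mem_avoidingVectors_iff {n : ℕ} {c d : G} (hd : d ≠ 0) (hcd : c ≠ d)
    {v : Fin (n + 1) → G} :
    v ∈ avoidingVectors n c d ↔ Fin.partialSum v ∈ cliqueWalks (univ.erase d) (n + 1) 0 c := by
  simp only [avoidingVectors, mem_filter, mem_univ, true_and, mem_cliqueWalks,
    Fin.partialSum_zero, Fin.partialSum_last, Fin.partialSum_succ, mem_erase, and_true, ne_eq,
    add_eq_left]
  constructor
  · rintro ⟨hv0, hsum, hprefix⟩
    refine ⟨hsum, fun ⟨k, hk⟩ => ?_, hv0⟩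
    rcases Nat.eq_zero_or_pos k with rfl | hk0
    · simpa using hd.symm
    rcases (Nat.lt_succ_iff.1 hk).eq_or_lt with rfl | hkn
    · rwa [show (⟨n + 1, hk⟩ : Fin (n + 2)) = Fin.last (n + 1) from rfl, Fin.partialSum_last,
        hsum]
    rw [Fin.partialSum_eq_sum_filter_lt]
    exact hprefix k hk0 (by omega)
  · rintro ⟨hsum, hS, hv0⟩
    refine ⟨hv0, hsum, fun k hk1 hkn => ?_⟩
    simpa [Fin.partialSum_eq_sum_filter_lt] using hS ⟨k, by omega⟩

theorem card_avoidingVectors {n : ℕ} {c d : G} (hd : d ≠ 0) (hcd : c ≠ d) :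
    #(avoidingVectors n c d) = #(cliqueWalks (univ.erase d) (n + 1) 0 c) := by
  rw [← card_filter_partialSum_mem _ fun s hs => (mem_cliqueWalks.1 hs).1]
  congr 1
  ext v
  simp [mem_avoidingVectors_iff hd hcd]

end AvoidingVectors

theorem nsmul_eq_ite_even {M : Type*} [AddMonoid M] {x : M} (hx : x + x = 0) (k : ℕ) :
    k • x = if Even k then 0 else x := by
  obtain ⟨j, rfl | rfl⟩ := Nat.even_or_odd' k
  · simp [mul_nsmul, two_nsmul, hx]
  · simp [add_nsmul, mul_nsmul, two_nsmul, hx, parity_simps]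

theorem eq_const_of_mem_avoidingVectors {n : ℕ} {d : ZMod 2 × ZMod 2}
    {v : Fin (n + 1) → ZMod 2 × ZMod 2} (hv : v ∈ avoidingVectors n col1 d)
    (hconst : ∀ j k, v j = v k) : v = fun _ => col1 := by
  have hv_eq : v = fun _ => v 0 := funext fun j => hconst j 0
  have hsum := (mem_filter.1 hv).2.2.1
  rw [hv_eq, sum_const, nsmul_eq_ite_even (CharTwo.add_self_eq_zero _)] at hsum
  split_ifs at hsum
  · exact absurd hsum (by decide)
  · rw [hv_eq, hsum]

theorem const_mem_avoidingVectors_iff (n : ℕ) :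
    (fun _ => col1) ∈ avoidingVectors n col1 col3 ↔ Even n := by
  have hcol1 : ∀ k : ℕ, k • col1 = if Even k then 0 else col1 :=
    nsmul_eq_ite_even (CharTwo.add_self_eq_zero col1)
  simp only [avoidingVectors, mem_filter, mem_univ, true_and, sum_const, card_univ,
    Fintype.card_fin, hcol1, Nat.even_add_one, ite_not]
  constructor
  · rintro ⟨-, hsum, -⟩
    split_ifs at hsum with hn
    · exact hn
    · exact absurd hsum (by decide)
  · intro hn
    refine ⟨fun _ => by decide, if_pos hn, fun k _ _ => ?_⟩
    split_ifs <;> decide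

theorem card_filter_nonconstant_add (n : ℕ) :
    #((avoidingVectors n col1 col3).filter fun v => ∃ j k, v j ≠ v k) +
      (if Even n then 1 else 0) = #(avoidingVectors n col1 col3) := by
  have herase : (avoidingVectors n col1 col3).filter (fun v => ∃ j k, v j ≠ v k) =
      (avoidingVectors n col1 col3).erase fun _ => col1 := by
    ext v
    simp only [mem_filter, mem_erase]
    constructor
    · rintro ⟨hv, j, k, hjk⟩
      exact ⟨by rintro rfl; exact hjk rfl, hv⟩
    · rintro ⟨hne, hv⟩
      refine ⟨hv, ?_⟩
      by_contra! hconst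
      exact hne (eq_const_of_mem_avoidingVectors hv hconst)
  rw [herase]
  split_ifs with hn
  · exact card_erase_add_one ((const_mem_avoidingVectors_iff n).2 hn)
  · rw [erase_eq_of_notMem (mt (const_mem_avoidingVectors_iff n).1 hn), add_zero]

theorem card_cliqueWalks_col1_add_two (m : ℕ) :
    #(cliqueWalks (univ.erase col3) (m + 2) 0 col1) =
      #(cliqueWalks (univ.erase col3) (m + 1) 0 col1) +
        2 * #(cliqueWalks (univ.erase col3) m 0 col1) := by
  have := card_cliqueWalks_add_two (S := univ.erase col3) (b := col1) (by decide) m 0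
  rw [show #(univ.erase col3) = 3 from rfl] at this
  omega

theorem add_ite_even_eq_of_recurrences (r w : ℕ → ℕ) (h1 : r 1 = 1) (h2 : r 2 = 2)
    (hrec : ∀ n, 2 ≤ n → r (n + 1) = r n + 2 * r (n - 1) + 1) (hw0 : w 0 = 0) (hw1 : w 1 = 1)
    (hwrec : ∀ m, w (m + 2) = w (m + 1) + 2 * w m) :
    ∀ n, 1 ≤ n → r n + (if Even n then 1 else 0) = w (n + 1) := by
  suffices h : ∀ m, r (m + 1) + (if Even (m + 1) then 1 else 0) = w (m + 2) by
    intro n hn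
    obtain ⟨m, rfl⟩ := Nat.exists_eq_add_of_le' hn
    exact h m
  intro m
  induction m using Nat.twoStepInduction with
  | zero => simp [hwrec, hw0, hw1, h1]
  | one => simp [hwrec, hw0, hw1, h2]
  | more m ih1 ih2 =>
    have hr : r (m + 3) = r (m + 2) + 2 * r (m + 1) + 1 := hrec (m + 2) (by omega)
    change r (m + 2) + (if Even (m + 2) then 1 else 0) = w (m + 3) at ih2
    change r (m + 3) + (if Even (m + 3) then 1 else 0) = w (m + 4)
    rw [hwrec (m + 2), ← ih1, ← ih2, hr]
    rcases Nat.even_or_odd m with h | h <;> simp [h, parity_simps] <;> omega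

/-- If `r(1)=1`, `r(2)=2` and `r(n+1)=r(n)+2r(n-1)+1` for `n ≥ 2`, then for
`n ≥ 1`, `r(n)` counts the vectors of length `n+1` over the three nonzero
elements of `Z/2 × Z/2` that are non-constant, sum to `1`, and have no
proper nonempty prefix summing to `3`. -/
theorem rseq_counts_positive_rigid_vectors (r : ℕ → ℕ)
    (h1 : r 1 = 1) (h2 : r 2 = 2)
    (hrec : ∀ n, 2 ≤ n → r (n + 1) = r n + 2 * r (n - 1) + 1) :
    ∀ n, 1 ≤ n →
      r n =
        Nat.card {v : Fin (n + 1) → ZMod 2 × ZMod 2 //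
          (∀ j, v j ≠ 0) ∧
          (∃ j k, v j ≠ v k) ∧
          (∑ j, v j) = col1 ∧
          (∀ k : ℕ, 1 ≤ k → k ≤ n →
            (∑ j ∈ Finset.univ.filter (fun j : Fin (n + 1) => (j : ℕ) < k),
              v j) ≠ col3)} := by
  intro n hn
  have hwalks := add_ite_even_eq_of_recurrences r
    (fun m => #(cliqueWalks (univ.erase col3) m 0 col1)) h1 h2 hrec (by decide) (by decide)
    card_cliqueWalks_col1_add_two n hn
  have hconst := card_filter_nonconstant_add n
  rw [card_avoidingVectors (by decide) (by decide)] at hconst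
  suffices r n = #((avoidingVectors n col1 col3).filter fun v => ∃ j k, v j ≠ v k) by
    rw [this, Nat.card_eq_fintype_card, Fintype.card_subtype]
    congr 1
    ext v
    simp only [avoidingVectors, mem_filter, mem_univ, true_and]
    tauto
  omega
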